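/- Let (A,e) be a J(α)-algebra (α ≠ 0,1) satisfying the Martindale-like conditions (i)–(iii), and let f be a nullifying function on A. Then for all a₀ ∈ A₀ and a_α, b_α ∈ A_α, one has f(a_α a₀, b_α) = 0. -/
import Mathlib


/-- Composite of left multiplications: `Lmul [t₁,…,t_r] x = t₁ * (t₂ * (⋯ * (t_r * x)))`. -/
def Lmul {A : Type*} [Mul A] (ts : List A) (x : A) : A := ts.foldr (· * ·) x

/-- A nullifying function on the nonempty finite sequences of `A`, with associated
positive integer `r` for axiom (V). -/
def IsNullifying {A : Type*} [NonUnitalNonAssocCommRing A] (f : List A → A) (r : ℕ) : Prop :=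
  0 < r ∧
  -- (I) permutation invariance
  (∀ l l' : List A, l.Perm l' → f l = f l') ∧
  -- (II)
  (∀ s t : List A, s ≠ [] → t ≠ [] → (f (s ++ [t.sum]) = f (s ++ t) ↔ f t = 0)) ∧
  -- (III)
  (∀ x : A, f [x] = 0) ∧
  -- (IV)
  (∀ s : List A, s ≠ [] → f (s ++ [(0 : A)]) = f s) ∧
  -- (V)
  (∀ ts : List A, ts.length = r → ∀ l : List A, Lmul ts (f l) = f (l.map (Lmul ts)))
/-- The `lam`-eigenspace (as a set) of left multiplication by `e`. -/
def eigSet {F A : Type*} [Field F] [NonUnitalNonAssocCommRing A] [Module F A]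
    (e : A) (lam : F) : Set A := {x | e * x = lam • x}

/-- `(A, e)` is a `J(α)`-algebra: `e` is idempotent, `α ≠ 0, 1`, `A` decomposes as the sum
of the `1`-, `0`- and `α`-eigenspaces of `L_e`, and the Jordan-type fusion law holds. -/
structure IsJAlg {F A : Type*} [Field F] [NonUnitalNonAssocCommRing A] [Module F A]
    (e : A) (α : F) : Prop where
  idem : e * e = e
  hα0 : α ≠ 0
  hα1 : α ≠ 1
  decomp : ∀ x : A, ∃ x1 ∈ eigSet e (1 : F), ∃ x0 ∈ eigSet e (0 : F), ∃ xa ∈ eigSet e α,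
    x = x1 + x0 + xa
  f11 : ∀ x ∈ eigSet e (1 : F), ∀ y ∈ eigSet e (1 : F), x * y ∈ eigSet e (1 : F)
  f10 : ∀ x ∈ eigSet e (1 : F), ∀ y ∈ eigSet e (0 : F), x * y = 0
  f1a : ∀ x ∈ eigSet e (1 : F), ∀ y ∈ eigSet e α, x * y ∈ eigSet e α
  f00 : ∀ x ∈ eigSet e (0 : F), ∀ y ∈ eigSet e (0 : F), x * y ∈ eigSet e (0 : F)
  f0a : ∀ x ∈ eigSet e (0 : F), ∀ y ∈ eigSet e α, x * y ∈ eigSet e α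
  faa : ∀ x ∈ eigSet e α, ∀ y ∈ eigSet e α, ∃ z1 ∈ eigSet e (1 : F), ∃ z0 ∈ eigSet e (0 : F),
    x * y = z1 + z0

/-- Martindale-like conditions (i)–(iii) for a `J(α)`-algebra. -/
def MartindaleJ {F A : Type*} [Field F] [NonUnitalNonAssocCommRing A] [Module F A]
    (e : A) (α : F) : Prop :=
  (∀ a ∈ eigSet e (1 : F), (∀ t ∈ eigSet e α, t * a = 0) → a = 0) ∧
  (∀ a ∈ eigSet e (0 : F), (∀ t ∈ eigSet e α, t * a = 0) → a = 0) ∧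
  (∀ a ∈ eigSet e (0 : F), (∀ t ∈ eigSet e (0 : F), t * a = 0) → a = 0) ∧
  (∀ a ∈ eigSet e α, (∀ t ∈ eigSet e (0 : F), t * a = 0) → a = 0)

set_option linter.unusedSectionVars false

section AuxJ

variable {F A : Type*} [Field F] [NonUnitalNonAssocCommRing A] [Module F A]
  [SMulCommClass F A A] [IsScalarTower F A A]

lemma memEig {e x : A} {lam : F} : x ∈ eigSet e lam ↔ e * x = lam • x := Iff.rfl

lemma eigZero (e : A) (lam : F) : (0:A) ∈ eigSet e lam := by
  simp [eigSet]

lemma eigAdd {e x y : A} {lam : F} (hx : x ∈ eigSet e lam) (hy : y ∈ eigSet e lam) :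
    x + y ∈ eigSet e lam := by
  have hx' := memEig.mp hx; have hy' := memEig.mp hy
  exact memEig.mpr (by rw [mul_add, hx', hy', smul_add])

lemma eigSmul {e x : A} {lam : F} (c : F) (hx : x ∈ eigSet e lam) :
    c • x ∈ eigSet e lam := by
  have hx' := memEig.mp hx
  exact memEig.mpr (by rw [mul_smul_comm, hx', smul_comm])

lemma eigNeg {e x : A} {lam : F} (hx : x ∈ eigSet e lam) : -x ∈ eigSet e lam := by
  have hx' := memEig.mp hx
  exact memEig.mpr (by rw [mul_neg, hx', smul_neg])

lemma smulCancel {c : F} (hc : c ≠ 0) {x : A} (h : c • x = 0) : x = 0 := by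
  have h2 : c⁻¹ • (c • x) = 0 := by rw [h, smul_zero]
  rwa [smul_smul, inv_mul_cancel₀ hc, one_smul] at h2

/-- Action facts. -/
lemma eMulU {e : A} {α : F} (_h : IsJAlg e α) {x : A} (hx : x ∈ eigSet e (1:F)) :
    e * x = x := by rw [memEig.mp hx, one_smul]

lemma eMulZ {e : A} {α : F} (_h : IsJAlg e α) {x : A} (hx : x ∈ eigSet e (0:F)) :
    e * x = 0 := by rw [memEig.mp hx, zero_smul]

lemma eMulW {e : A} {α : F} (_h : IsJAlg e α) {x : A} (hx : x ∈ eigSet e α) :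
    e * x = α • x := memEig.mp hx

/-- `M' = α⁻¹ • e` acts as identity on `W`, as `α⁻¹` on `U`, kills `Z`. -/
lemma MMulW {e : A} {α : F} (h : IsJAlg e α) {x : A} (hx : x ∈ eigSet e α) :
    ((α⁻¹ : F) • e) * x = x := by
  rw [smul_mul_assoc, eMulW h hx, smul_smul, inv_mul_cancel₀ h.hα0, one_smul]

lemma MMulU {e : A} {α : F} (h : IsJAlg e α) {x : A} (hx : x ∈ eigSet e (1:F)) :
    ((α⁻¹ : F) • e) * x = (α⁻¹ : F) • x := by
  rw [smul_mul_assoc, eMulU h hx]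

lemma MMulZ {e : A} {α : F} (h : IsJAlg e α) {x : A} (hx : x ∈ eigSet e (0:F)) :
    ((α⁻¹ : F) • e) * x = 0 := by
  rw [smul_mul_assoc, eMulZ h hx, smul_zero]

/-- Uniqueness of the decomposition. -/
lemma uniq3 {e : A} {α : F} (h : IsJAlg e α) {x1 x0 xa : A}
    (h1 : x1 ∈ eigSet e (1:F)) (h0 : x0 ∈ eigSet e (0:F)) (hα : xa ∈ eigSet e α)
    (hsum : x1 + x0 + xa = 0) : x1 = 0 ∧ x0 = 0 ∧ xa = 0 := by
  have e1 : e * x1 = x1 := eMulU h h1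
  have e0 : e * x0 = 0 := eMulZ h h0
  have ea : e * xa = α • xa := eMulW h hα
  have k1 : x1 + α • xa = 0 := by
    have hc := congrArg (fun y => e * y) hsum
    simpa [mul_add, e1, e0, ea] using hc
  have k2 : x1 + (α * α) • xa = 0 := by
    have hc := congrArg (fun y => e * y) k1
    simpa [mul_add, e1, mul_smul_comm, ea, smul_smul] using hc
  have k3 : (α * α - α) • xa = 0 := by
    rw [sub_smul]
    have hd : (x1 + (α*α) • xa) - (x1 + α • xa) = (α*α) • xa - α • xa := by abel
    rw [← hd, k2, k1, sub_zero]
  have hane : α * α - α ≠ 0 := by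
    have hh : α * α - α = α * (α - 1) := by ring
    rw [hh]
    exact mul_ne_zero h.hα0 (sub_ne_zero.mpr h.hα1)
  have hxa : xa = 0 := smulCancel hane k3
  have hx1 : x1 = 0 := by simpa [hxa] using k1
  have hx0 : x0 = 0 := by
    have := hsum
    rw [hx1, hxa, zero_add, add_zero] at this
    exact this
  exact ⟨hx1, hx0, hxa⟩

/-- Multiplication helpers (using commutativity). -/
lemma mulZU {e : A} {α : F} (h : IsJAlg e α) {z u : A}
    (hz : z ∈ eigSet e (0:F)) (hu : u ∈ eigSet e (1:F)) : z * u = 0 := by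
  rw [mul_comm]; exact h.f10 u hu z hz

lemma mulWU {e : A} {α : F} (h : IsJAlg e α) {w u : A}
    (hw : w ∈ eigSet e α) (hu : u ∈ eigSet e (1:F)) : w * u ∈ eigSet e α := by
  rw [mul_comm]; exact h.f1a u hu w hw

lemma mulWZ {e : A} {α : F} (h : IsJAlg e α) {w z : A}
    (hw : w ∈ eigSet e α) (hz : z ∈ eigSet e (0:F)) : w * z ∈ eigSet e α := by
  rw [mul_comm]; exact h.f0a z hz w hw

end AuxJ
section AuxL

variable {F A : Type*} [Field F] [NonUnitalNonAssocCommRing A] [Module F A]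
  [SMulCommClass F A A] [IsScalarTower F A A]

lemma Lmul_nil (x : A) : Lmul [] x = x := rfl

lemma Lmul_cons (t : A) (ts : List A) (x : A) : Lmul (t :: ts) x = t * Lmul ts x := rfl

lemma Lmul_append (ts1 ts2 : List A) (x : A) :
    Lmul (ts1 ++ ts2) x = Lmul ts1 (Lmul ts2 x) := by
  simp [Lmul, List.foldr_append]

lemma Lmul_zero (ts : List A) : Lmul ts (0 : A) = 0 := by
  induction ts with
  | nil => rfl
  | cons t ts ih => rw [Lmul_cons, ih, mul_zero]

lemma Lmul_add (ts : List A) (x y : A) : Lmul ts (x + y) = Lmul ts x + Lmul ts y := by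
  induction ts with
  | nil => rfl
  | cons t ts ih => rw [Lmul_cons, Lmul_cons, Lmul_cons, ih, mul_add]

lemma Lmul_rep_fix {g x : A} (hx : g * x = x) (k : ℕ) :
    Lmul (List.replicate k g) x = x := by
  induction k with
  | zero => rfl
  | succ k ih => rw [List.replicate_succ, Lmul_cons, ih, hx]

lemma Lmul_rep_smul {g x : A} {c : F} (hx : g * x = c • x) (k : ℕ) :
    Lmul (List.replicate k g) x = c ^ k • x := by
  induction k with
  | zero => simp [Lmul_nil]
  | succ k ih =>
    rw [List.replicate_succ, Lmul_cons, ih, mul_smul_comm, hx, smul_smul, pow_succ]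

lemma Lmul_rep_kill {g x : A} (hx : g * x = 0) (k : ℕ) :
    Lmul (List.replicate (k + 1) g) x = 0 := by
  induction k with
  | zero => simpa [List.replicate_succ, Lmul_cons, Lmul_nil] using hx
  | succ k ih => rw [List.replicate_succ, Lmul_cons, ih, mul_zero]

/-- Lists of `Z`-elements. -/
lemma LmulZs_Z {e : A} {α : F} (h : IsJAlg e α) :
    ∀ zs : List A, (∀ z ∈ zs, z ∈ eigSet e (0:F)) →
    ∀ x ∈ eigSet e (0:F), Lmul zs x ∈ eigSet e (0:F) := by
  intro zs
  induction zs with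
  | nil => intro _ x hx; exact hx
  | cons z zs ih =>
    intro hall x hx
    rw [Lmul_cons]
    exact h.f00 z (hall z (by simp)) _ (ih (fun a haz => hall a (by simp [haz])) x hx)

lemma LmulZs_W {e : A} {α : F} (h : IsJAlg e α) :
    ∀ zs : List A, (∀ z ∈ zs, z ∈ eigSet e (0:F)) →
    ∀ x ∈ eigSet e α, Lmul zs x ∈ eigSet e α := by
  intro zs
  induction zs with
  | nil => intro _ x hx; exact hx
  | cons z zs ih =>
    intro hall x hx
    rw [Lmul_cons]
    exact h.f0a z (hall z (by simp)) _ (ih (fun a haz => hall a (by simp [haz])) x hx)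

lemma LmulZs_U0 {e : A} {α : F} (h : IsJAlg e α) :
    ∀ zs : List A, zs ≠ [] → (∀ z ∈ zs, z ∈ eigSet e (0:F)) →
    ∀ x ∈ eigSet e (1:F), Lmul zs x = 0 := by
  intro zs
  induction zs with
  | nil => intro hne; exact absurd rfl hne
  | cons z zs ih =>
    intro _ hall x hx
    rw [Lmul_cons]
    match zs, ih with
    | [], _ => exact mulZU h (hall z (by simp)) hx
    | z' :: zs', ih =>
      rw [ih (by simp) (fun a haz => hall a (by simp [haz])) x hx, mul_zero]

/-- mapping `z ↦ α⁻¹ • e + z` over a `Z`-list: acts like plain `z`-products on `Z`. -/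
lemma LmulOps_Z {e : A} {α : F} (h : IsJAlg e α) :
    ∀ zs : List A, (∀ z ∈ zs, z ∈ eigSet e (0:F)) →
    ∀ x ∈ eigSet e (0:F),
      Lmul (zs.map (fun z => (α⁻¹ : F) • e + z)) x = Lmul zs x := by
  intro zs
  induction zs with
  | nil => intro _ x _; rfl
  | cons z zs ih =>
    intro hall x hx
    have hZ : Lmul zs x ∈ eigSet e (0:F) :=
      LmulZs_Z h zs (fun a haz => hall a (by simp [haz])) x hx
    rw [List.map_cons, Lmul_cons, ih (fun a haz => hall a (by simp [haz])) x hx,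
      add_mul, MMulZ h hZ, zero_add, Lmul_cons]

lemma LmulOps_W {e : A} {α : F} (h : IsJAlg e α) :
    ∀ zs : List A, (∀ z ∈ zs, z ∈ eigSet e (0:F)) →
    ∀ x ∈ eigSet e α,
      Lmul (zs.map (fun z => (α⁻¹ : F) • e + z)) x ∈ eigSet e α := by
  intro zs
  induction zs with
  | nil => intro _ x hx; exact hx
  | cons z zs ih =>
    intro hall x hx
    have hW : Lmul (zs.map (fun z => (α⁻¹ : F) • e + z)) x ∈ eigSet e α :=
      ih (fun a haz => hall a (by simp [haz])) x hx
    rw [List.map_cons, Lmul_cons, add_mul, MMulW h hW]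
    exact eigAdd hW (h.f0a z (hall z (by simp)) _ hW)

end AuxL
section AuxF

variable {F A : Type*} [Field F] [NonUnitalNonAssocCommRing A] [Module F A]
  [SMulCommClass F A A] [IsScalarTower F A A]
variable {e : A} {α : F} {f : List A → A} {r : ℕ}

lemma f_single (hf : IsNullifying f r) (x : A) : f [x] = 0 := hf.2.2.2.1 x

lemma f_perm (hf : IsNullifying f r) {l l' : List A} (hp : l.Perm l') : f l = f l' :=
  hf.2.1 l l' hp

lemma f_drop0 (hf : IsNullifying f r) (s : List A) (hs : s ≠ []) :
    f (s ++ [(0:A)]) = f s := hf.2.2.2.2.1 s hs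

lemma f_pair_zero_right (hf : IsNullifying f r) (x : A) : f [x, 0] = 0 := by
  have h1 : f ([x] ++ [(0:A)]) = f [x] := f_drop0 hf [x] (by simp)
  simpa [f_single hf x] using h1

lemma f_pair_zero_left (hf : IsNullifying f r) (x : A) : f [0, x] = 0 := by
  rw [f_perm hf (List.Perm.swap x 0 [])]
  exact f_pair_zero_right hf x

lemma f_swap (hf : IsNullifying f r) (x y : A) : f [x, y] = f [y, x] :=
  f_perm hf (List.Perm.swap y x [])

/-- Splitting a trailing sum, axiom (II). -/
lemma f_split (hf : IsNullifying f r) (s : List A) (hs : s ≠ []) {y z : A}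
    (hyz : f [y, z] = 0) : f (s ++ [y + z]) = f (s ++ [y, z]) := by
  have h2 := (hf.2.2.1 s [y, z] hs (by simp)).mpr hyz
  rwa [show List.sum [y, z] = y + z by simp] at h2

/-- Iterated Martindale: a `Z ⊕ W` element annihilated by all length-`k` `Z`-products
is zero. -/
lemma KZ (h : IsJAlg e α) (hm : MartindaleJ e α) :
    ∀ k : ℕ, ∀ x0 xa : A, x0 ∈ eigSet e (0:F) → xa ∈ eigSet e α →
      (∀ zs : List A, zs.length = k → (∀ z ∈ zs, z ∈ eigSet e (0:F)) →
        Lmul zs (x0 + xa) = 0) →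
      x0 = 0 ∧ xa = 0 := by
  intro k
  induction k with
  | zero =>
    intro x0 xa h0 hαm hyp
    have h1 : x0 + xa = 0 := hyp [] rfl (by simp)
    have h2 : (0:A) + x0 + xa = 0 := by rw [zero_add]; exact h1
    obtain ⟨_, h3, h4⟩ := uniq3 h (eigZero e 1) h0 hαm h2
    exact ⟨h3, h4⟩
  | succ k ih =>
    intro x0 xa h0 hαm hyp
    have key : ∀ z ∈ eigSet e (0:F), z * x0 = 0 ∧ z * xa = 0 := by
      intro z hz
      apply ih (z * x0) (z * xa) (h.f00 z hz x0 h0) (h.f0a z hz xa hαm)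
      intro zs hlen hall
      have h5 : Lmul (zs ++ [z]) (x0 + xa) = 0 := by
        apply hyp (zs ++ [z]) (by simp [hlen]) 
        intro a haz
        rcases List.mem_append.mp haz with h' | h'
        · exact hall a h'
        · simpa using (by simpa using h' : a = z) ▸ hz
      rw [Lmul_append, Lmul_cons, Lmul_nil, mul_add] at h5
      exact h5
    constructor
    · exact hm.2.2.1 x0 h0 (fun t ht => (key t ht).1)
    · exact hm.2.2.2 xa hαm (fun t ht => (key t ht).2)

/-- Iterated Martindale for pure `Z` elements. -/
lemma downZ (h : IsJAlg e α) (hm : MartindaleJ e α) :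
    ∀ k : ℕ, ∀ x : A, x ∈ eigSet e (0:F) →
      (∀ zs : List A, zs.length = k → (∀ z ∈ zs, z ∈ eigSet e (0:F)) →
        Lmul zs x = 0) →
      x = 0 := by
  intro k
  induction k with
  | zero => intro x _ hyp; exact hyp [] rfl (by simp)
  | succ k ih =>
    intro x hx hyp
    apply hm.2.2.1 x hx
    intro z hz
    apply ih (z * x) (h.f00 z hz x hx)
    intro zs hlen hall
    have h5 : Lmul (zs ++ [z]) x = 0 := by
      apply hyp (zs ++ [z]) (by simp [hlen])
      intro a haz
      rcases List.mem_append.mp haz with h' | h'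
      · exact hall a h'
      · simpa using (by simpa using h' : a = z) ▸ hz
    rw [Lmul_append, Lmul_cons, Lmul_nil] at h5
    exact h5

end AuxF
section AuxG

variable {F A : Type*} [Field F] [NonUnitalNonAssocCommRing A] [Module F A]
  [SMulCommClass F A A] [IsScalarTower F A A]
variable {e : A} {α : F} {f : List A → A} {r : ℕ}

/-- If the first entry is in `U`, the value of `f` on the pair lies in `U`. -/
lemma FU (h : IsJAlg e α) (hm : MartindaleJ e α) (hf : IsNullifying f r)
    {x1 : A} (hx1 : x1 ∈ eigSet e (1:F)) (y : A) : f [x1, y] ∈ eigSet e (1:F) := by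
  obtain ⟨c1, hc1, c0, hc0, ca, hca, hceq⟩ := h.decomp (f [x1, y])
  have hz : ∀ zs : List A, zs.length = r → (∀ z ∈ zs, z ∈ eigSet e (0:F)) →
      Lmul zs (c0 + ca) = 0 := by
    intro zs hlen hall
    have hne : zs ≠ [] := by
      intro hh; subst hh; simp at hlen; have := hf.1; omega
    have h1 := hf.2.2.2.2.2 zs hlen [x1, y]
    rw [List.map_cons, List.map_cons, List.map_nil,
      LmulZs_U0 h zs hne hall x1 hx1, f_pair_zero_left hf] at h1
    have h2 : Lmul zs (f [x1, y]) = 0 := h1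
    rw [hceq, show c1 + c0 + ca = c1 + (c0 + ca) by abel, Lmul_add,
      LmulZs_U0 h zs hne hall c1 hc1, zero_add] at h2
    exact h2
  obtain ⟨h3, h4⟩ := KZ h hm r c0 ca hc0 hca hz
  rw [hceq, h3, h4, add_zero, add_zero]
  exact hc1

/-- If the first entry is in `Z`, the value of `f` on the pair lies in `Z`. -/
lemma FZ (h : IsJAlg e α) (hm : MartindaleJ e α) (hf : IsNullifying f r)
    {x0 : A} (hx0 : x0 ∈ eigSet e (0:F)) (y : A) : f [x0, y] ∈ eigSet e (0:F) := by
  obtain ⟨r', hr'⟩ : ∃ r', r = r' + 1 := ⟨r - 1, by have := hf.1; omega⟩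
  obtain ⟨c1, hc1, c0, hc0, ca, hca, hceq⟩ := h.decomp (f [x0, y])
  have h1 := hf.2.2.2.2.2 (List.replicate r e) (by simp) [x0, y]
  rw [List.map_cons, List.map_cons, List.map_nil] at h1
  have hx0kill : Lmul (List.replicate r e) x0 = 0 := by
    rw [hr']; exact Lmul_rep_kill (eMulZ h hx0) r'
  rw [hx0kill, f_pair_zero_left hf, hceq, Lmul_add, Lmul_add,
    Lmul_rep_fix (eMulU h hc1), Lmul_rep_smul (eMulW h hca)] at h1
  have hc0kill : Lmul (List.replicate r e) c0 = 0 := by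
    rw [hr']; exact Lmul_rep_kill (eMulZ h hc0) r'
  rw [hc0kill, add_zero] at h1
  -- h1 : c1 + α ^ r • ca = 0
  have h2 : c1 + 0 + α ^ r • ca = 0 := by rw [add_zero]; exact h1
  obtain ⟨h3, _, h4⟩ := uniq3 h hc1 (eigZero e 0) (eigSmul _ hca) h2
  have h5 : ca = 0 := smulCancel (pow_ne_zero r h.hα0) h4
  rw [hceq, h3, h5, zero_add, add_zero]
  exact hc0

/-- Pairs with one `U`- and one `Z`-entry vanish. -/
lemma P2 (h : IsJAlg e α) (hm : MartindaleJ e α) (hf : IsNullifying f r)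
    {x1 x0 : A} (hx1 : x1 ∈ eigSet e (1:F)) (hx0 : x0 ∈ eigSet e (0:F)) :
    f [x1, x0] = 0 := by
  have hU : e * f [x1, x0] = f [x1, x0] := eMulU h (FU h hm hf hx1 x0)
  have hZ : e * f [x1, x0] = 0 := by
    rw [f_swap hf]; exact eMulZ h (FZ h hm hf hx0 x1)
  rw [hZ] at hU
  exact hU.symm

/-- Key triple lemma: `f [w, q1, q0]` has trivial `W`-component. -/
lemma TripleUZ (h : IsJAlg e α) (hm : MartindaleJ e α) (hf : IsNullifying f r)
    {w q1 q0 : A} (hw : w ∈ eigSet e α) (hq1 : q1 ∈ eigSet e (1:F))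
    (hq0 : q0 ∈ eigSet e (0:F)) :
    ∃ T1 ∈ eigSet e (1:F), ∃ T0 ∈ eigSet e (0:F), f [w, q1, q0] = T1 + T0 := by
  obtain ⟨r', hr'⟩ : ∃ r', r = r' + 1 := ⟨r - 1, by have := hf.1; omega⟩
  obtain ⟨T1, hT1, T0, hT0, Ta, hTa, hTeq⟩ := h.decomp (f [w, q1, q0])
  have h1 := hf.2.2.2.2.2 (List.replicate r e) (by simp) [w, q1, q0]
  rw [List.map_cons, List.map_cons, List.map_cons, List.map_nil] at h1
  have hkill : Lmul (List.replicate r e) q0 = 0 := by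
    rw [hr']; exact Lmul_rep_kill (eMulZ h hq0) r'
  rw [hkill, Lmul_rep_fix (eMulU h hq1), Lmul_rep_smul (eMulW h hw)] at h1
  have hT0kill : Lmul (List.replicate r e) T0 = 0 := by
    rw [hr']; exact Lmul_rep_kill (eMulZ h hT0) r'
  rw [hTeq, Lmul_add, Lmul_add, Lmul_rep_fix (eMulU h hT1), hT0kill, add_zero,
    Lmul_rep_smul (eMulW h hTa)] at h1
  -- h1 : T1 + α ^ r • Ta = f [α ^ r • w, q1, 0]
  have h2 : f [α ^ r • w, q1, (0:A)] = f [α ^ r • w, q1] :=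
    f_drop0 hf [α ^ r • w, q1] (by simp)
  have h3 : f [α ^ r • w, q1] = f [q1, α ^ r • w] := f_swap hf _ _
  set μ := f [q1, α ^ r • w] with hμ
  have hμU : μ ∈ eigSet e (1:F) := FU h hm hf hq1 _
  have h4 : T1 + α ^ r • Ta = μ := by rw [h1, h2, h3]
  have h5 : (T1 + -μ) + 0 + α ^ r • Ta = 0 := by
    rw [← h4]; abel
  obtain ⟨_, _, h6⟩ := uniq3 h (eigAdd hT1 (eigNeg hμU)) (eigZero e 0) (eigSmul _ hTa) h5
  have h7 : Ta = 0 := smulCancel (pow_ne_zero r h.hα0) h6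
  exact ⟨T1, hT1, T0, hT0, by rw [hTeq, h7, add_zero]⟩

end AuxG
section AuxP

variable {F A : Type*} [Field F] [NonUnitalNonAssocCommRing A] [Module F A]
  [SMulCommClass F A A] [IsScalarTower F A A]
variable {e : A} {α : F} {f : List A → A} {r : ℕ}

/-- Pairs with a `U`-entry and a `W`-entry vanish. -/
lemma P3 (h : IsJAlg e α) (hm : MartindaleJ e α) (hf : IsNullifying f r)
    {x1 w : A} (hx1 : x1 ∈ eigSet e (1:F)) (hw : w ∈ eigSet e α) :
    f [x1, w] = 0 := by
  obtain ⟨r', hr'⟩ : ∃ r', r = r' + 1 := ⟨r - 1, by have := hf.1; omega⟩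
  set c := f [x1, w] with hc
  have hcU : c ∈ eigSet e (1:F) := FU h hm hf hx1 w
  apply hm.1 c hcU
  intro t ht
  -- operator: t ∘ M'^{r'}
  have hlen : (t :: List.replicate r' ((α⁻¹ : F) • e)).length = r := by simp [hr']
  have h1 := hf.2.2.2.2.2 (t :: List.replicate r' ((α⁻¹ : F) • e)) hlen [x1, w]
  rw [List.map_cons, List.map_cons, List.map_nil] at h1
  rw [Lmul_cons, Lmul_cons, Lmul_cons] at h1
  rw [Lmul_rep_smul (MMulU h hcU), Lmul_rep_smul (MMulU h hx1),
    Lmul_rep_fix (MMulW h hw)] at h1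
  rw [mul_smul_comm, mul_smul_comm] at h1
  -- h1 : (α⁻¹)^r' • (t * c) = f [(α⁻¹)^r' • (t * x1), t * w]
  obtain ⟨q1, hq1, q0, hq0, hqeq⟩ := h.faa t ht w hw
  rw [hqeq] at h1
  have hw' : ((α⁻¹:F) ^ r' • (t * x1)) ∈ eigSet e α := eigSmul _ (mulWU h ht hx1)
  have h2 : f [(α⁻¹:F) ^ r' • (t * x1), q1 + q0] =
      f [(α⁻¹:F) ^ r' • (t * x1), q1, q0] := by
    have := f_split hf [(α⁻¹:F) ^ r' • (t * x1)] (by simp) (P2 h hm hf hq1 hq0)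
    simpa using this
  rw [h2] at h1
  obtain ⟨T1, hT1, T0, hT0, hTeq⟩ := TripleUZ h hm hf hw' hq1 hq0
  rw [hTeq] at h1
  -- h1 : (α⁻¹)^r' • (t * c) = T1 + T0
  have htc : t * c ∈ eigSet e α := mulWU h ht hcU
  have h3 : T1 + T0 + -((α⁻¹:F) ^ r' • (t * c)) = 0 := by rw [← h1]; abel
  obtain ⟨_, _, h4⟩ := uniq3 h hT1 hT0 (eigNeg (eigSmul _ htc)) h3
  have h5 : (α⁻¹:F) ^ r' • (t * c) = 0 := by
    have := congrArg Neg.neg h4; simpa using this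
  exact smulCancel (pow_ne_zero r' (inv_ne_zero h.hα0)) h5

/-- Pairs with a `Z`-entry and a `W`-entry vanish. -/
lemma P1 (h : IsJAlg e α) (hm : MartindaleJ e α) (hf : IsNullifying f r)
    {x0 w : A} (hx0 : x0 ∈ eigSet e (0:F)) (hw : w ∈ eigSet e α) :
    f [x0, w] = 0 := by
  obtain ⟨r', hr'⟩ : ∃ r', r = r' + 1 := ⟨r - 1, by have := hf.1; omega⟩
  set c := f [x0, w] with hc
  have hcZ : c ∈ eigSet e (0:F) := FZ h hm hf hx0 w
  -- step A/B : all (mixed) r'-fold Z-products of c vanish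
  have stepB : ∀ zs : List A, zs.length = r' → (∀ z ∈ zs, z ∈ eigSet e (0:F)) →
      Lmul zs c = 0 := by
    intro zs hlen hall
    have hmemZ : Lmul zs c ∈ eigSet e (0:F) := LmulZs_Z h zs hall c hcZ
    apply hm.2.1 _ hmemZ
    intro t ht
    have hlents : (t :: zs.map (fun z => (α⁻¹ : F) • e + z)).length = r := by
      simp [hlen, hr']
    have h1 := hf.2.2.2.2.2 (t :: zs.map (fun z => (α⁻¹ : F) • e + z)) hlents [x0, w]
    rw [List.map_cons, List.map_cons, List.map_nil] at h1
    rw [Lmul_cons, Lmul_cons, Lmul_cons] at h1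
    rw [LmulOps_Z h zs hall c hcZ, LmulOps_Z h zs hall x0 hx0] at h1
    set wt := Lmul (zs.map (fun z => (α⁻¹ : F) • e + z)) w with hwt
    have hwtW : wt ∈ eigSet e α := LmulOps_W h zs hall w hw
    obtain ⟨q1, hq1, q0, hq0, hqeq⟩ := h.faa t ht wt hwtW
    rw [hqeq] at h1
    have hxw : (t * Lmul zs x0) ∈ eigSet e α := by
      rw [mul_comm]; exact h.f0a _ (LmulZs_Z h zs hall x0 hx0) t ht
    have h2 : f [t * Lmul zs x0, q1 + q0] = f [t * Lmul zs x0, q1, q0] := by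
      have := f_split hf [t * Lmul zs x0] (by simp) (P2 h hm hf hq1 hq0)
      simpa using this
    rw [h2] at h1
    obtain ⟨T1, hT1, T0, hT0, hTeq⟩ := TripleUZ h hm hf hxw hq1 hq0
    rw [hTeq] at h1
    -- h1 : t * Lmul zs c = T1 + T0
    have htc : t * Lmul zs c ∈ eigSet e α := by
      rw [mul_comm]; exact h.f0a _ hmemZ t ht
    have h3 : T1 + T0 + -(t * Lmul zs c) = 0 := by rw [← h1]; abel
    obtain ⟨_, _, h4⟩ := uniq3 h hT1 hT0 (eigNeg htc) h3
    have := congrArg Neg.neg h4; simpa using this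
  exact downZ h hm r' c hcZ stepB

end AuxP
/-- Lemma 4.3: `f(a_α a₀, b_α) = 0`. -/
theorem jalg_nullifying_pair_mixed {F A : Type*} [Field F] [NonUnitalNonAssocCommRing A]
    [Module F A] [SMulCommClass F A A] [IsScalarTower F A A]
    (e : A) (α : F) (h : IsJAlg e α) (hm : MartindaleJ e α)
    (f : List A → A) (r : ℕ) (hf : IsNullifying f r)
    (a0 : A) (h0 : a0 ∈ eigSet e (0 : F))
    (aα bα : A) (ha : aα ∈ eigSet e α) (hb : bα ∈ eigSet e α) :
    f [aα * a0, bα] = 0 := by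
  obtain ⟨r', hr'⟩ : ∃ r', r = r' + 1 := ⟨r - 1, by have := hf.1; omega⟩
  have hV := hf.2.2.2.2.2
  set u := aα * a0 with hu
  have huW : u ∈ eigSet e α := by rw [hu, mul_comm]; exact h.f0a a0 h0 aα ha
  obtain ⟨z1, hz1, z0, hz0, hzz⟩ := h.faa aα ha bα hb
  -- ### Step 1 : 0 = f [u, bα + ζ] with ζ ∈ U
  set M : A := (α⁻¹ : F) • e with hM
  set ts2 : List A := List.replicate r' M ++ [M + aα] with hts2
  have hlents2 : ts2.length = r := by simp [hts2, hr']
  have h1 := hV ts2 hlents2 [a0, bα]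
  rw [P1 h hm hf h0 hb, Lmul_zero, List.map_cons, List.map_cons, List.map_nil] at h1
  have hA2 : Lmul ts2 a0 = u := by
    rw [hts2, Lmul_append, Lmul_cons, Lmul_nil, add_mul, MMulZ h h0, zero_add, ← hu]
    exact Lmul_rep_fix (MMulW h huW) r'
  have hB2 : Lmul ts2 bα = bα + Lmul (List.replicate r' M) (z1 + z0) := by
    rw [hts2, Lmul_append, Lmul_cons, Lmul_nil, add_mul, MMulW h hb, hzz, Lmul_add,
      Lmul_rep_fix (MMulW h hb)]
  rw [hA2, hB2] at h1
  -- second application to clean up with M^r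
  have h2 := hV (List.replicate r M) (by simp) [u, bα + Lmul (List.replicate r' M) (z1 + z0)]
  rw [← h1, Lmul_zero, List.map_cons, List.map_cons, List.map_nil] at h2
  rw [Lmul_rep_fix (MMulW h huW), Lmul_add, Lmul_rep_fix (MMulW h hb)] at h2
  have hcomb : Lmul (List.replicate r M) (Lmul (List.replicate r' M) (z1 + z0)) =
      (α⁻¹ : F) ^ (r + r') • z1 := by
    rw [← Lmul_append, ← List.replicate_add, Lmul_add, Lmul_rep_smul (MMulU h hz1),
      show r + r' = (r' + r') + 1 by omega, Lmul_rep_kill (MMulZ h hz0), add_zero,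
      show (r' + r') + 1 = r + r' by omega]
  rw [hcomb] at h2
  set ζ := (α⁻¹ : F) ^ (r + r') • z1 with hζ
  have hζU : ζ ∈ eigSet e (1:F) := eigSmul _ hz1
  -- h2 : 0 = f [u, bα + ζ]
  -- ### Step 2 : f [u, bα, ζ] = 0
  have hbz : f [bα, ζ] = 0 := by rw [f_swap hf]; exact P3 h hm hf hζU hb
  have hQ2 : f [u, bα, ζ] = 0 := by
    have hsp := f_split hf [u] (by simp) hbz
    simp only [List.cons_append, List.nil_append] at hsp
    rw [← hsp, ← h2]
  -- ### Step 3 : the value c of f [u, bα] lies in U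
  obtain ⟨c1, hc1, c0, hc0, ca, hca, hceq⟩ := h.decomp (f [u, bα])
  have hc0ca : c0 = 0 ∧ ca = 0 := by
    apply KZ h hm r c0 ca hc0 hca
    intro zs hlen hall
    have hne : zs ≠ [] := by intro hh; subst hh; simp at hlen; have := hf.1; omega
    have h3 := hV zs hlen [u, bα, ζ]
    rw [hQ2, Lmul_zero, List.map_cons, List.map_cons, List.map_cons, List.map_nil,
      LmulZs_U0 h zs hne hall ζ hζU] at h3
    have h4 : f [Lmul zs u, Lmul zs bα] = 0 := by
      rw [← f_drop0 hf [Lmul zs u, Lmul zs bα] (by simp)]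
      exact h3.symm
    have h5 := hV zs hlen [u, bα]
    rw [List.map_cons, List.map_cons, List.map_nil, h4, hceq,
      show c1 + c0 + ca = c1 + (c0 + ca) by abel, Lmul_add,
      LmulZs_U0 h zs hne hall c1 hc1, zero_add] at h5
    exact h5
  have hcU : f [u, bα] = c1 := by rw [hceq, hc0ca.1, hc0ca.2, add_zero, add_zero]
  -- ### Step 4 : t * c1 = 0 for every t ∈ W
  have step4 : ∀ t ∈ eigSet e α, t * c1 = 0 := by
    intro t ht
    have hlents : (t :: List.replicate r' M).length = r := by simp [hr']
    have h6 := hV (t :: List.replicate r' M) hlents [u, bα]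
    rw [List.map_cons, List.map_cons, List.map_nil, Lmul_cons, Lmul_cons, Lmul_cons,
      hcU, Lmul_rep_smul (MMulU h hc1), Lmul_rep_fix (MMulW h huW),
      Lmul_rep_fix (MMulW h hb), mul_smul_comm] at h6
    -- h6 : (α⁻¹)^r' • (t * c1) = f [t * u, t * bα]
    obtain ⟨p1, hp1, p0, hp0, hpeq⟩ := h.faa t ht u huW
    obtain ⟨s1, hs1, s0, hs0, hseq⟩ := h.faa t ht bα hb
    rw [hpeq, hseq] at h6
    have hsp1 : f [p1 + p0, s1 + s0] = f [p1 + p0, s1, s0] := by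
      have := f_split hf [p1 + p0] (by simp) (P2 h hm hf hs1 hs0)
      simpa using this
    have hrot : f [p1 + p0, s1, s0] = f [s1, s0, p1 + p0] :=
      f_perm hf (List.perm_append_comm (l₁ := [p1 + p0]) (l₂ := [s1, s0]))
    have hsp2 : f [s1, s0, p1 + p0] = f [s1, s0, p1, p0] := by
      have := f_split hf [s1, s0] (by simp) (P2 h hm hf hp1 hp0)
      simpa using this
    rw [hsp1, hrot, hsp2] at h6
    -- analyse N := f [s1, s0, p1, p0]
    obtain ⟨N1, hN1, N0, hN0, Na, hNa, hNeq⟩ := h.decomp (f [s1, s0, p1, p0])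
    have h7 := hV (List.replicate r e) (by simp) [s1, s0, p1, p0]
    rw [List.map_cons, List.map_cons, List.map_cons, List.map_cons, List.map_nil] at h7
    have hks0 : Lmul (List.replicate r e) s0 = 0 := by
      rw [hr']; exact Lmul_rep_kill (eMulZ h hs0) r'
    have hkp0 : Lmul (List.replicate r e) p0 = 0 := by
      rw [hr']; exact Lmul_rep_kill (eMulZ h hp0) r'
    have hkN0 : Lmul (List.replicate r e) N0 = 0 := by
      rw [hr']; exact Lmul_rep_kill (eMulZ h hN0) r'
    rw [hNeq, Lmul_add, Lmul_add, Lmul_rep_fix (eMulU h hN1), hkN0, add_zero,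
      Lmul_rep_smul (eMulW h hNa), hks0, hkp0,
      Lmul_rep_fix (eMulU h hs1), Lmul_rep_fix (eMulU h hp1)] at h7
    -- h7 : N1 + α ^ r • Na = f [s1, 0, p1, 0]
    have hperm4 : f [s1, (0:A), p1, 0] = f [s1, p1, 0, 0] :=
      f_perm hf (List.Perm.cons s1 (List.Perm.swap p1 0 [0]))
    have hdrop1 : f [s1, p1, (0:A), 0] = f [s1, p1, 0] :=
      f_drop0 hf [s1, p1, 0] (by simp)
    have hdrop2 : f [s1, p1, (0:A)] = f [s1, p1] := f_drop0 hf [s1, p1] (by simp)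
    rw [hperm4, hdrop1, hdrop2] at h7
    set μ := f [s1, p1] with hμ
    have hμU : μ ∈ eigSet e (1:F) := FU h hm hf hs1 p1
    have h8 : (N1 + -μ) + 0 + α ^ r • Na = 0 := by rw [← h7]; abel
    obtain ⟨_, _, h9⟩ := uniq3 h (eigAdd hN1 (eigNeg hμU)) (eigZero e 0) (eigSmul _ hNa) h8
    have hNa0 : Na = 0 := smulCancel (pow_ne_zero r h.hα0) h9
    rw [hNeq, hNa0, add_zero] at h6
    -- h6 : (α⁻¹)^r' • (t * c1) = N1 + N0
    have htc : t * c1 ∈ eigSet e α := mulWU h ht hc1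
    have h10 : N1 + N0 + -((α⁻¹:F) ^ r' • (t * c1)) = 0 := by rw [← h6]; abel
    obtain ⟨_, _, h11⟩ := uniq3 h hN1 hN0 (eigNeg (eigSmul _ htc)) h10
    have h12 : (α⁻¹:F) ^ r' • (t * c1) = 0 := by
      have := congrArg Neg.neg h11; simpa using this
    exact smulCancel (pow_ne_zero r' (inv_ne_zero h.hα0)) h12
  -- ### Step 5
  have hc10 : c1 = 0 := hm.1 c1 hc1 step4
  rw [hcU, hc10]
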